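/- There is an absolute constant c > 0 such that for every n ≥ 1 and N = 2ⁿ, there exists a 2D SLP of size at most c·n deriving the 2D string ShiftBin_N. -/

import Mathlib

/-!
## Two-dimensional strings.
A 2D string over alphabet `A` of size `h × w` is represented canonically:
`f i j` is `some` of the character in (0-indexed) row `i`, column `j` when
`i < h` and `j < w`, and `none` outside of the rectangle.  All operations
below produce such canonical representations, so equality of 2D strings
built from them coincides with equality of the dimensions and of all entries.
-/
structure Str2 (A : Type) where
  h : ℕ
  w : ℕ
  f : ℕ → ℕ → Option A

namespace Str2

variable {A : Type}

/-- Canonical constructor: pads with `none` outside of the `h × w` rectangle. -/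
def mk' (h w : ℕ) (g : ℕ → ℕ → Option A) : Str2 A :=
  ⟨h, w, fun i j => if i < h ∧ j < w then g i j else none⟩

/-- The empty 2D string. -/
def empty : Str2 A := ⟨0, 0, fun _ _ => none⟩

/-- The `1 × 1` 2D string consisting of a single character. -/
def single (a : A) : Str2 A := mk' 1 1 fun _ _ => some a

/-- Horizontal concatenation `S ⊞ T` (meaningful when the heights agree). -/
def hcat (S T : Str2 A) : Str2 A :=
  mk' S.h (S.w + T.w) fun i j => if j < S.w then S.f i j else T.f i (j - S.w)

/-- Vertical concatenation `S ⊟ T` (meaningful when the widths agree). -/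
def vcat (S T : Str2 A) : Str2 A :=
  mk' (S.h + T.h) S.w fun i j => if i < S.h then S.f i j else T.f (i - S.h) j

/-- Horizontal concatenation `S₁ ⊞ S₂ ⊞ ⋯ ⊞ S_k` of a list of 2D strings. -/
def hcatList : List (Str2 A) → Str2 A
  | [] => empty
  | S :: rest => rest.foldl hcat S

/-- Vertical concatenation `S₁ ⊟ S₂ ⊟ ⋯ ⊟ S_k` of a list of 2D strings. -/
def vcatList : List (Str2 A) → Str2 A
  | [] => empty
  | S :: rest => rest.foldl vcat S

/-- The transpose. -/
def transpose (S : Str2 A) : Str2 A := mk' S.w S.h fun i j => S.f j i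

/-- The `i`-th row (0-indexed) of `S`, as a `1 × w` 2D string. -/
def rowStr (S : Str2 A) (i : ℕ) : Str2 A := mk' 1 S.w fun _ j => S.f i j

/-- The `j`-th column (0-indexed) of `S`, read top to bottom, as a `1 × h` 2D string. -/
def colStr (S : Str2 A) (j : ℕ) : Str2 A := mk' 1 S.h fun _ i => S.f i j

/-- A height-one 2D string, viewed as an ordinary (1D) string, i.e. a list. -/
def toList (S : Str2 A) : List A := (List.range S.w).filterMap fun j => S.f 0 j

/-- An ordinary (1D) string viewed as a height-one 2D string. -/
def ofList (l : List A) : Str2 A := mk' 1 l.length fun _ j => l[j]?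

/-- The concatenation of all rows of `S` from top to bottom,
as a height-one 2D string of width `h * w`. -/
def rowsConcat (S : Str2 A) : Str2 A :=
  mk' 1 (S.h * S.w) fun _ j => S.f (j / S.w) (j % S.w)

end Str2

/-- The right-hand side of a production of a 2D SLP: a single character,
a horizontal concatenation of two nonterminals, or a vertical concatenation
of two nonterminals. -/
inductive Rhs2 (A V : Type) where
  | chr : A → Rhs2 A V
  | horiz : V → V → Rhs2 A V
  | vert : V → V → Rhs2 A V

/-- A two-dimensional straight-line program over the alphabet `A`:
a finite set `V` of nonterminals, a starting nonterminal, and a production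
map `rhs`.  Acyclicity of the relation "appears in the right-hand side of"
is witnessed by the function `rank`, which strictly decreases from the
left-hand side of each production to the nonterminals on its right-hand side. -/
structure SLP2 (A : Type) where
  V : Type
  fintypeV : Fintype V
  start : V
  rhs : V → Rhs2 A V
  rank : V → ℕ
  rank_horiz : ∀ {X Y Z}, rhs X = Rhs2.horiz Y Z → rank Y < rank X ∧ rank Z < rank X
  rank_vert : ∀ {X Y Z}, rhs X = Rhs2.vert Y Z → rank Y < rank X ∧ rank Z < rank X

namespace SLP2

variable {A : Type}

/-- Fuel-based evaluation of expansions (with enough fuel it computes the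
unique expansion of a nonterminal). -/
def expAux (G : SLP2 A) : ℕ → G.V → Str2 A
  | 0, _ => Str2.empty
  | n + 1, X =>
    match G.rhs X with
    | .chr a => Str2.single a
    | .horiz Y Z => (G.expAux n Y).hcat (G.expAux n Z)
    | .vert Y Z => (G.expAux n Y).vcat (G.expAux n Z)

/-- The (unique) expansion of a nonterminal `X`: since `rank` strictly
decreases along productions, fuel `rank X + 1` always suffices. -/
def expNT (G : SLP2 A) (X : G.V) : Str2 A := G.expAux (G.rank X + 1) X

/-- The 2D string derived by the SLP. -/
def exp (G : SLP2 A) : Str2 A := G.expNT G.start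

/-- Fuel-based computation of the depth of the derivation tree below a
nonterminal (a node labeled by a production `chr σ` has a single leaf child). -/
def depthAux (G : SLP2 A) : ℕ → G.V → ℕ
  | 0, _ => 0
  | n + 1, X =>
    match G.rhs X with
    | .chr _ => 1
    | .horiz Y Z => 1 + max (G.depthAux n Y) (G.depthAux n Z)
    | .vert Y Z => 1 + max (G.depthAux n Y) (G.depthAux n Z)

/-- The depth of the derivation tree below nonterminal `X`. -/
def depthNT (G : SLP2 A) (X : G.V) : ℕ := G.depthAux (G.rank X + 1) X

/-- The depth of the SLP: the depth of its derivation tree. -/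
def depth (G : SLP2 A) : ℕ := G.depthNT G.start

/-- The size of the SLP: the total number of symbols on the right-hand
sides of all productions. -/
def size (G : SLP2 A) : ℕ :=
  letI := G.fintypeV
  ∑ X : G.V, (match G.rhs X with
    | .chr _ => 1
    | .horiz _ _ => 2
    | .vert _ _ => 2)

/-- The number of nonterminals of the SLP. -/
def numNT (G : SLP2 A) : ℕ :=
  letI := G.fintypeV
  Fintype.card G.V

/-- Well-formedness: dimensions match in every production, i.e. in a
horizontal concatenation both arguments have equal heights, and in a
vertical concatenation both arguments have equal widths. -/
def WF (G : SLP2 A) : Prop :=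
  ∀ X : G.V,
    match G.rhs X with
    | .chr _ => True
    | .horiz Y Z => (G.expNT Y).h = (G.expNT Z).h
    | .vert Y Z => (G.expNT Y).w = (G.expNT Z).w

/-- A 1D SLP: a 2D SLP that uses only horizontal concatenations and derives
a string of height `1`. -/
def OneDim (G : SLP2 A) : Prop :=
  (∀ X Y Z, G.rhs X ≠ Rhs2.vert Y Z) ∧ (G.exp).h = 1

end SLP2
/-- The alphabet `{0, 1, $}`. -/
inductive Alpha3 : Type where
  | zero : Alpha3
  | one : Alpha3
  | dollar : Alpha3
deriving DecidableEq

instance : Fintype Alpha3 where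
  elems := {Alpha3.zero, Alpha3.one, Alpha3.dollar}
  complete := by intro x; cases x <;> simp

/-- For `N = 2^n`, the 2D string `Bin_N` of size `N × (n+2)` whose `i`-th row
(1-indexed) is the `n`-bit binary representation (most significant bit first)
of `i - 1`, surrounded by one `$` symbol on each side. -/
def binStr (n : ℕ) : Str2 Alpha3 :=
  Str2.mk' (2 ^ n) (n + 2) fun i j =>
    some (if j = 0 ∨ j = n + 1 then Alpha3.dollar
      else if Nat.testBit i (n - j) then Alpha3.one else Alpha3.zero)

/-- For `N = 2^n`, the 2D string `ShiftBin_N` of size `2N × N(n+2)`: for every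
`i ∈ [0..N-1]`, the columns `i(n+2)+1` through `(i+1)(n+2)` (1-indexed) consist
of `i` rows filled with `0`'s, followed by a copy of `Bin_N`, followed by
`N - i` rows filled with `0`'s. -/
def shiftBinStr (n : ℕ) : Str2 Alpha3 :=
  Str2.mk' (2 * 2 ^ n) (2 ^ n * (n + 2)) fun r c =>
    let i := c / (n + 2)
    if i ≤ r ∧ r < i + 2 ^ n then (binStr n).f (r - i) (c % (n + 2)) else some Alpha3.zero

/-- A binary string `b`, surrounded by one `$` symbol on each side, as a string
over an alphabet with distinguished symbols `z` (zero), `o` (one), `d` (dollar). -/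
def dollarWrap {A : Type} (z o d : A) (b : List Bool) : List A :=
  d :: (b.map fun x => if x then o else z) ++ [d]

/-- The exponent of `M'`: the largest `m` such that `M' = 2^m` satisfies
`M' * (log₂ M' + 2) ≤ M / 2`, i.e. `2 * 2^m * (m + 2) ≤ M`. -/
def mExp (M : ℕ) : ℕ := Nat.findGreatest (fun m => 2 * 2 ^ m * (m + 2) ≤ M) M

/-- The 2D string `C_{N,M}` of size `N × M`: with `M'` the largest power of two
such that `M' * (log₂ M' + 2) ≤ M / 2` and `B = ShiftBin_{M'}` (of size
`2M' × M'(log₂ M' + 2)`), it consists of a left block of `⌊N/(2M')⌋` vertically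
concatenated copies of `B` padded below with `0`'s to height `N`; to its right,
a right block of `M'` rows of `0`'s followed by `⌊(N-M')/(2M')⌋` vertically
concatenated copies of `B`, padded below with `0`'s to height `N`; and columns
of `0`'s padding the total width to `M`. -/
def gadgetC (N M : ℕ) : Str2 Alpha3 :=
  let n := mExp M
  let M' := 2 ^ n
  let W := M' * (n + 2)
  Str2.mk' N M fun r c =>
    if c < W then
      (if r < 2 * M' * (N / (2 * M')) then (shiftBinStr n).f (r % (2 * M')) c
       else some Alpha3.zero)
    else if c < 2 * W then
      (if M' ≤ r ∧ r < M' + 2 * M' * ((N - M') / (2 * M'))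
       then (shiftBinStr n).f ((r - M') % (2 * M')) (c - W)
       else some Alpha3.zero)
    else some Alpha3.zero

/-!
`ShiftBin_N` is the staircase of `N` copies of `Bin_N` on a background of `0`'s, and a staircase
of `k + l` copies is the staircase of `k` copies over a block of zeros, next to a block of
zeros over the staircase of `l` copies. Doubling `n` times, together with the zero blocks
(also obtained by doubling), costs `O(n)` rules. `Bin_N` itself is a `$`-column next to
`B_n`, where the rows of `B_m` are the `m`-bit counters followed by `$`, and `B_{m+1}` is
`B_m` with a `0`-column prepended, stacked on `B_m` with a `1`-column prepended. All these
strings are derived by nonterminals of a single SLP, grown one rule at a time.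
-/

namespace Str2

variable {A : Type}

@[simp] theorem mk'_h (h w : ℕ) (g : ℕ → ℕ → Option A) : (mk' h w g).h = h := rfl
@[simp] theorem mk'_w (h w : ℕ) (g : ℕ → ℕ → Option A) : (mk' h w g).w = w := rfl
@[simp] theorem hcat_w (S T : Str2 A) : (S.hcat T).w = S.w + T.w := rfl
@[simp] theorem vcat_h (S T : Str2 A) : (S.vcat T).h = S.h + T.h := rfl
@[simp] theorem vcat_w (S T : Str2 A) : (S.vcat T).w = S.w := rfl

theorem mk'_congr {h₁ h₂ w₁ w₂ : ℕ} {g₁ g₂ : ℕ → ℕ → Option A} (hh : h₁ = h₂) (hw : w₁ = w₂)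
    (hg : ∀ i j, i < h₁ → j < w₁ → g₁ i j = g₂ i j) : mk' h₁ w₁ g₁ = mk' h₂ w₂ g₂ := by
  subst hh hw
  simp only [mk', Str2.mk.injEq, true_and]
  funext i j
  split_ifs with hij
  exacts [hg i j hij.1 hij.2, rfl]

theorem mk'_f_of_lt {h w i j : ℕ} (g : ℕ → ℕ → Option A) (hi : i < h) (hj : j < w) :
    (mk' h w g).f i j = g i j :=
  if_pos ⟨hi, hj⟩

theorem vcat_f_of_lt {S T : Str2 A} {i j : ℕ} (hi : i < S.h + T.h) (hj : j < S.w) :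
    (S.vcat T).f i j = if i < S.h then S.f i j else T.f (i - S.h) j :=
  mk'_f_of_lt _ hi hj

theorem mk'_hcat_mk' {h w₁ w₂ : ℕ} (g₁ g₂ : ℕ → ℕ → Option A) :
    (mk' h w₁ g₁).hcat (mk' h w₂ g₂) =
      mk' h (w₁ + w₂) fun i j => if j < w₁ then g₁ i j else g₂ i (j - w₁) := by
  refine mk'_congr rfl rfl fun i j hi hj => ?_
  simp only [mk'_h, mk'_w] at hi hj
  by_cases hj₁ : j < w₁
  · simp [mk', hj₁, hi]
  · simp [mk', hj₁, hi]
    omega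

theorem mk'_vcat_mk' {h₁ h₂ w : ℕ} (g₁ g₂ : ℕ → ℕ → Option A) :
    (mk' h₁ w g₁).vcat (mk' h₂ w g₂) =
      mk' (h₁ + h₂) w fun i j => if i < h₁ then g₁ i j else g₂ (i - h₁) j := by
  refine mk'_congr rfl rfl fun i j hi hj => ?_
  simp only [mk'_h, mk'_w] at hi hj
  by_cases hi₁ : i < h₁
  · simp [mk', hi₁, hj]
  · simp [mk', hi₁, hj]
    omega

def const (h w : ℕ) (a : A) : Str2 A := mk' h w fun _ _ => some a

@[simp] theorem const_h (h w : ℕ) (a : A) : (const h w a).h = h := rfl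
@[simp] theorem const_w (h w : ℕ) (a : A) : (const h w a).w = w := rfl

@[simp] theorem single_h (a : A) : (single a).h = 1 := rfl

theorem const_f_of_lt {h w i j : ℕ} (a : A) (hi : i < h) (hj : j < w) :
    (const h w a).f i j = some a :=
  mk'_f_of_lt _ hi hj

theorem single_eq_const (a : A) : single a = const 1 1 a := rfl

theorem const_hcat_const {h w₁ w₂ w : ℕ} (hw : w₁ + w₂ = w) (a : A) :
    (const h w₁ a).hcat (const h w₂ a) = const h w a := by
  rw [const, const, mk'_hcat_mk']
  exact mk'_congr rfl hw fun _ _ _ _ => ite_self _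

theorem const_vcat_const {h₁ h₂ h w : ℕ} (hh : h₁ + h₂ = h) (a : A) :
    (const h₁ w a).vcat (const h₂ w a) = const h w a := by
  rw [const, const, mk'_vcat_mk']
  exact mk'_congr hh rfl fun _ _ _ _ => ite_self _

/-- `k` copies of `B`, side by side, the `i`-th one shifted down by `i` rows, on a background
of `z`'s. -/
def staircase (z : A) (B : Str2 A) (k : ℕ) : Str2 A :=
  mk' (B.h + k) (k * B.w) fun r c =>
    if c / B.w ≤ r ∧ r < c / B.w + B.h then B.f (r - c / B.w) (c % B.w) else some z

@[simp] theorem staircase_h (z : A) (B : Str2 A) (k : ℕ) : (staircase z B k).h = B.h + k := rfl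
@[simp] theorem staircase_w (z : A) (B : Str2 A) (k : ℕ) : (staircase z B k).w = k * B.w := rfl

theorem vcat_const_eq_staircase_one (z : A) (B : Str2 A) :
    B.vcat (const 1 B.w z) = staircase z B 1 := by
  refine mk'_congr rfl (one_mul _).symm fun r c hr hc => ?_
  rw [Nat.div_eq_of_lt hc, Nat.mod_eq_of_lt hc]
  simp only [const_h] at hr
  by_cases hrB : r < B.h
  · simp [hrB]
  · simp [hrB, const, mk', hc]
    omega

theorem staircase_add (z : A) (B : Str2 A) (k l : ℕ) :
    ((staircase z B k).vcat (const l (k * B.w) z)).hcat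
      ((const k (l * B.w) z).vcat (staircase z B l)) = staircase z B (k + l) := by
  refine mk'_congr (by simp; omega) (by simp; ring) fun r c hr hc => ?_
  simp only [vcat_h, vcat_w, staircase_h, staircase_w, const_h, const_w] at hr hc ⊢
  have hw : 0 < B.w := Nat.pos_of_ne_zero fun h => by simp [h] at hc
  by_cases hck : c < k * B.w
  · have hi : c / B.w < k := Nat.div_lt_of_lt_mul (by linarith)
    simp only [hck, if_true]
    rw [vcat_f_of_lt (by simpa using hr) (by simpa using hck)]
    by_cases hrk : r < B.h + k
    · rw [if_pos (by simpa using hrk), staircase, mk'_f_of_lt _ hrk hck]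
    · rw [if_neg (by simpa using hrk), const_f_of_lt _ (by simp; omega) hck, if_neg (by omega)]
  · obtain ⟨c, rfl⟩ := Nat.exists_eq_add_of_le (not_lt.1 hck)
    have hc' : c < l * B.w := by omega
    have hdiv : (k * B.w + c) / B.w = c / B.w + k := by
      rw [add_comm, Nat.add_mul_div_right _ _ hw]
    simp only [hck, if_false]
    rw [Nat.add_sub_cancel_left, vcat_f_of_lt (by simp; omega) (by simpa using hc'),
      hdiv, Nat.mul_add_mod_self_right]
    by_cases hrk : r < k
    · rw [if_pos (by simpa using hrk), const_f_of_lt _ hrk hc']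
      generalize c / B.w = q
      exact (if_neg (by omega)).symm
    · rw [if_neg (by simpa using hrk), staircase, mk'_f_of_lt _ (by simp; omega) hc', const_h]
      generalize c / B.w = q
      rw [show r - k - q = r - (q + k) by omega]
      congr 1
      simp only [eq_iff_iff]
      omega

end Str2

open Str2

@[simp] theorem binStr_w (n : ℕ) : (binStr n).w = n + 2 := rfl

/-- The `2^m × (m+1)` string whose row `i` is the `m`-bit binary representation of `i`
followed by a `$`. -/
def binSuffix (m : ℕ) : Str2 Alpha3 :=
  mk' (2 ^ m) (m + 1) fun i c =>
    some (if c = m then .dollar else if Nat.testBit i (m - 1 - c) then .one else .zero)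

@[simp] theorem binSuffix_h (m : ℕ) : (binSuffix m).h = 2 ^ m := rfl

theorem binSuffix_zero : binSuffix 0 = single .dollar :=
  mk'_congr rfl rfl fun _ c _ hc => by simp [show c = 0 by omega]

theorem binSuffix_succ (m : ℕ) :
    ((const (2 ^ m) 1 .zero).hcat (binSuffix m)).vcat ((const (2 ^ m) 1 .one).hcat (binSuffix m)) =
      binSuffix (m + 1) := by
  rw [const, const, binSuffix, mk'_hcat_mk', mk'_hcat_mk', mk'_vcat_mk']
  refine mk'_congr (by rw [pow_succ]; omega) (by omega) fun i c hi hc => ?_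
  by_cases hlow : i < 2 ^ m
  · rcases c with _ | c
    · simp [hlow, Nat.testBit_lt_two_pow hlow]
    · simp [hlow, show m - 1 - c = m - (c + 1) by omega]
  · obtain ⟨x, rfl⟩ := Nat.exists_eq_add_of_le (not_lt.1 hlow)
    rcases c with _ | c
    · simp [Nat.testBit_two_pow_add_eq, Nat.testBit_lt_two_pow (show x < 2 ^ m by omega)]
    · by_cases hcm : c = m
      · simp [hcm]
      · simp [hcm, Nat.testBit_two_pow_add_gt (show m - (c + 1) < m by omega),
          show m - 1 - c = m - (c + 1) by omega]

theorem const_hcat_binSuffix (n : ℕ) : (const (2 ^ n) 1 .dollar).hcat (binSuffix n) = binStr n := by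
  rw [const, binSuffix, mk'_hcat_mk']
  refine mk'_congr rfl (by omega) fun i c _ _ => ?_
  rcases c with _ | c
  · simp
  · simp [show n - 1 - c = n - (c + 1) by omega]

theorem staircase_binStr (n : ℕ) : staircase .zero (binStr n) (2 ^ n) = shiftBinStr n :=
  mk'_congr (by simp [binStr]; omega) rfl fun _ _ _ _ => rfl

namespace Rhs2

variable {A V W : Type}

def map (f : V → W) : Rhs2 A V → Rhs2 A W
  | .chr a => .chr a
  | .horiz Y Z => .horiz (f Y) (f Z)
  | .vert Y Z => .vert (f Y) (f Z)

def size : Rhs2 A V → ℕ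
  | .chr _ => 1
  | .horiz _ _ => 2
  | .vert _ _ => 2

theorem map_id (r : Rhs2 A V) : r.map id = r := by
  cases r <;> rfl

@[simp] theorem size_map (f : V → W) (r : Rhs2 A V) : (r.map f).size = r.size := by
  cases r <;> rfl

theorem map_eq_horiz {f : V → W} {r : Rhs2 A V} {Y Z : W} (h : r.map f = .horiz Y Z) :
    ∃ y z, r = .horiz y z ∧ Y = f y ∧ Z = f z := by
  cases r <;> simp_all [map]

theorem map_eq_vert {f : V → W} {r : Rhs2 A V} {Y Z : W} (h : r.map f = .vert Y Z) :
    ∃ y z, r = .vert y z ∧ Y = f y ∧ Z = f z := by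
  cases r <;> simp_all [map]

end Rhs2

namespace SLP2

variable {A : Type} (G : SLP2 A)

def expRhs : Rhs2 A G.V → Str2 A
  | .chr a => Str2.single a
  | .horiz Y Z => (G.expNT Y).hcat (G.expNT Z)
  | .vert Y Z => (G.expNT Y).vcat (G.expNT Z)

def Valid : Rhs2 A G.V → Prop
  | .chr _ => True
  | .horiz Y Z => (G.expNT Y).h = (G.expNT Z).h
  | .vert Y Z => (G.expNT Y).w = (G.expNT Z).w

theorem wf_iff : G.WF ↔ ∀ X, G.Valid (G.rhs X) := Iff.rfl

theorem size_eq_sum : G.size = letI := G.fintypeV; ∑ X, (G.rhs X).size := by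
  unfold size
  congr 1 with X
  cases G.rhs X <;> rfl

theorem expAux_eq_of_rank_lt : ∀ {m m' : ℕ} {X : G.V}, G.rank X < m → G.rank X < m' →
    G.expAux m X = G.expAux m' X
  | m + 1, m' + 1, X, hm, hm' => by
    simp only [expAux]
    split
    · rfl
    next Y Z h =>
      obtain ⟨hY, hZ⟩ := G.rank_horiz h
      rw [expAux_eq_of_rank_lt (m := m) (m' := m') (by omega) (by omega),
        expAux_eq_of_rank_lt (X := Z) (m := m) (m' := m') (by omega) (by omega)]
    next Y Z h =>
      obtain ⟨hY, hZ⟩ := G.rank_vert h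
      rw [expAux_eq_of_rank_lt (m := m) (m' := m') (by omega) (by omega),
        expAux_eq_of_rank_lt (X := Z) (m := m) (m' := m') (by omega) (by omega)]

theorem expNT_eq (X : G.V) : G.expNT X = G.expRhs (G.rhs X) := by
  unfold expNT
  simp only [expAux]
  split
  next a h => rw [h]; rfl
  next Y Z h =>
    obtain ⟨hY, hZ⟩ := G.rank_horiz h
    rw [h, expRhs, expNT, expNT, G.expAux_eq_of_rank_lt (m' := G.rank Y + 1) hY (by omega),
      G.expAux_eq_of_rank_lt (m' := G.rank Z + 1) hZ (by omega)]
  next Y Z h =>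
    obtain ⟨hY, hZ⟩ := G.rank_vert h
    rw [h, expRhs, expNT, expNT, G.expAux_eq_of_rank_lt (m' := G.rank Y + 1) hY (by omega),
      G.expAux_eq_of_rank_lt (m' := G.rank Z + 1) hZ (by omega)]

section Hom

variable {G H : SLP2 A}

variable (f : G.V → H.V)

theorem expAux_map (hrhs : ∀ v, H.rhs (f v) = (G.rhs v).map f) :
    ∀ (m : ℕ) (v : G.V), H.expAux m (f v) = G.expAux m v
  | 0, _ => rfl
  | m + 1, v => by
    simp only [expAux, hrhs]
    cases G.rhs v <;> simp only [Rhs2.map, expAux_map hrhs m]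

theorem expNT_map (hrhs : ∀ v, H.rhs (f v) = (G.rhs v).map f)
    (hrank : ∀ v, H.rank (f v) = G.rank v) (v : G.V) : H.expNT (f v) = G.expNT v := by
  rw [expNT, hrank, expAux_map f hrhs, expNT]

theorem expRhs_map (hexp : ∀ v, H.expNT (f v) = G.expNT v) (r : Rhs2 A G.V) :
    H.expRhs (r.map f) = G.expRhs r := by
  cases r <;> simp only [Rhs2.map, expRhs, hexp]

theorem valid_map (hexp : ∀ v, H.expNT (f v) = G.expNT v) (r : Rhs2 A G.V) :
    H.Valid (r.map f) ↔ G.Valid r := by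
  cases r <;> simp only [Rhs2.map, Valid, hexp]

end Hom

def withStart (X : G.V) : SLP2 A := { G with start := X }

def extend (r : Rhs2 A G.V) : SLP2 A where
  V := Option G.V
  fintypeV := letI := G.fintypeV; inferInstance
  start := none
  rhs := fun X => X.elim (r.map some) fun v => (G.rhs v).map some
  rank := fun X => X.elim ((letI := G.fintypeV; Finset.univ.sup G.rank) + 1) G.rank
  rank_horiz := by
    let := G.fintypeV
    rintro (_ | v) Y Z h
    · obtain ⟨y, z, -, rfl, rfl⟩ := Rhs2.map_eq_horiz h
      exact ⟨Nat.lt_succ_of_le (Finset.le_sup (Finset.mem_univ y)),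
        Nat.lt_succ_of_le (Finset.le_sup (Finset.mem_univ z))⟩
    · obtain ⟨y, z, hv, rfl, rfl⟩ := Rhs2.map_eq_horiz h
      exact G.rank_horiz hv
  rank_vert := by
    let := G.fintypeV
    rintro (_ | v) Y Z h
    · obtain ⟨y, z, -, rfl, rfl⟩ := Rhs2.map_eq_vert h
      exact ⟨Nat.lt_succ_of_le (Finset.le_sup (Finset.mem_univ y)),
        Nat.lt_succ_of_le (Finset.le_sup (Finset.mem_univ z))⟩
    · obtain ⟨y, z, hv, rfl, rfl⟩ := Rhs2.map_eq_vert h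
      exact G.rank_vert hv

variable {G}

theorem expNT_withStart (X Y : G.V) : (G.withStart X).expNT Y = G.expNT Y :=
  expNT_map (G := G) (H := G.withStart X) id (fun v => (Rhs2.map_id (G.rhs v)).symm) (fun _ => rfl) Y

theorem exp_withStart (X : G.V) : (G.withStart X).exp = G.expNT X :=
  expNT_withStart X X

theorem WF.withStart (hG : G.WF) (X : G.V) : (G.withStart X).WF := by
  refine (wf_iff _).2 fun v => ?_
  rw [show (G.withStart X).rhs v = (G.rhs v).map id from (Rhs2.map_id _).symm]
  exact (valid_map (G := G) (H := G.withStart X) id (expNT_withStart X) (G.rhs v)).2 (hG v)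

theorem size_withStart (X : G.V) : (G.withStart X).size = G.size :=
  (size_eq_sum _).trans (size_eq_sum G).symm

theorem expNT_extend_some (r : Rhs2 A G.V) (v : G.V) :
    (G.extend r).expNT (some v) = G.expNT v :=
  expNT_map (G := G) (H := G.extend r) some (fun _ => rfl) (fun _ => rfl) v

theorem expNT_extend_none (r : Rhs2 A G.V) : (G.extend r).expNT none = G.expRhs r :=
  ((G.extend r).expNT_eq none).trans (expRhs_map (H := G.extend r) some (expNT_extend_some r) r)

theorem WF.extend {r : Rhs2 A G.V} (hG : G.WF) (hr : G.Valid r) : (G.extend r).WF := by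
  rintro (_ | v)
  · exact (valid_map (H := G.extend r) some (expNT_extend_some r) r).2 hr
  · exact (valid_map (H := G.extend r) some (expNT_extend_some r) (G.rhs v)).2 (hG v)

theorem size_extend (r : Rhs2 A G.V) : (G.extend r).size = G.size + r.size := by
  let := G.fintypeV
  rw [size_eq_sum, size_eq_sum, add_comm]
  exact (Fintype.sum_option _).trans (by simp [extend])

def DerivableWithin (k : ℕ) (L : Set (Str2 A)) : Prop :=
  ∃ G : SLP2 A, G.WF ∧ G.size ≤ k ∧ ∀ S ∈ L, ∃ X, G.expNT X = S

namespace DerivableWithin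

variable {k : ℕ} {L : Set (Str2 A)} {S : Str2 A}

theorem singleton_single (a : A) : DerivableWithin 1 {Str2.single a} := by
  refine ⟨⟨Unit, inferInstance, (), fun _ => .chr a, fun _ => 0, nofun, nofun⟩,
    fun _ => trivial, le_rfl, ?_⟩
  rintro S rfl
  exact ⟨(), rfl⟩

theorem mono {k' : ℕ} {L' : Set (Str2 A)} (h : DerivableWithin k L) (hk : k ≤ k')
    (hL : L' ⊆ L) : DerivableWithin k' L' :=
  let ⟨G, hG, hsize, hL'⟩ := h
  ⟨G, hG, hsize.trans hk, fun S hS => hL' S (hL hS)⟩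

theorem insert_of_rhs {c : ℕ} (h : DerivableWithin k L)
    (hS : ∀ G : SLP2 A, (∀ S ∈ L, ∃ X, G.expNT X = S) →
      ∃ r : Rhs2 A G.V, G.Valid r ∧ r.size ≤ c ∧ G.expRhs r = S) :
    DerivableWithin (k + c) (insert S L) := by
  obtain ⟨G, hG, hsize, hL⟩ := h
  obtain ⟨r, hr, hrsize, rfl⟩ := hS G hL
  refine ⟨G.extend r, hG.extend hr, by rw [size_extend]; omega, ?_⟩
  rintro S (rfl | hS)
  · exact ⟨none, expNT_extend_none r⟩
  · obtain ⟨X, rfl⟩ := hL S hS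
    exact ⟨some X, expNT_extend_some r X⟩

theorem insert_single (h : DerivableWithin k L) (a : A) :
    DerivableWithin (k + 1) (insert (Str2.single a) L) :=
  h.insert_of_rhs fun _ _ => ⟨.chr a, trivial, le_rfl, rfl⟩

theorem insert_hcat (h : DerivableWithin k L) (S T : Str2 A) (hS : S ∈ L := by simp)
    (hT : T ∈ L := by simp) (hST : S.h = T.h := by simp) :
    DerivableWithin (k + 2) (insert (S.hcat T) L) :=
  h.insert_of_rhs fun G hL => by
    obtain ⟨Y, rfl⟩ := hL S hS
    obtain ⟨Z, rfl⟩ := hL T hT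
    exact ⟨.horiz Y Z, hST, le_rfl, rfl⟩

theorem insert_vcat (h : DerivableWithin k L) (S T : Str2 A) (hS : S ∈ L := by simp)
    (hT : T ∈ L := by simp) (hST : S.w = T.w := by simp) :
    DerivableWithin (k + 2) (insert (S.vcat T) L) :=
  h.insert_of_rhs fun G hL => by
    obtain ⟨Y, rfl⟩ := hL S hS
    obtain ⟨Z, rfl⟩ := hL T hT
    exact ⟨.vert Y Z, hST, le_rfl, rfl⟩

theorem exists_slp (h : DerivableWithin k {S}) : ∃ G : SLP2 A, G.WF ∧ G.exp = S ∧ G.size ≤ k := by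
  obtain ⟨G, hG, hsize, hS⟩ := h
  obtain ⟨X, rfl⟩ := hS S rfl
  exact ⟨G.withStart X, hG.withStart X, exp_withStart X, (size_withStart X).trans_le hsize⟩

open Str2

theorem insert_const_row (h : DerivableWithin k L) {a : A} (ha : single a ∈ L) :
    ∀ j : ℕ, DerivableWithin (k + 2 * j) (insert (const 1 (j + 1) a) L)
  | 0 => h.mono le_rfl (Set.insert_subset ha subset_rfl)
  | j + 1 => by
    have h' := (h.insert_const_row ha j).insert_hcat (const 1 (j + 1) a) (single a)
      (hT := Set.mem_insert_of_mem _ ha)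
    rw [single_eq_const, const_hcat_const rfl] at h'
    exact h'.mono (by omega) (Set.insert_subset_insert (Set.subset_insert _ _))

theorem staircase_two_pow (h : DerivableWithin k L) {z : A} {B : Str2 A} (hB : B ∈ L)
    (hz : const 1 B.w z ∈ L) :
    ∀ m : ℕ, DerivableWithin (k + 2 + 10 * m) {const (2 ^ m) (2 ^ m * B.w) z, staircase z B (2 ^ m)}
  | 0 => by
    have h' := h.insert_vcat B (const 1 B.w z) hB hz
    rw [vcat_const_eq_staircase_one] at h'
    exact h'.mono le_rfl (by simpa [Set.insert_subset_iff] using Set.mem_insert_of_mem _ hz)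
  | m + 1 => by
    have h' := h.staircase_two_pow hB hz m
      |>.insert_hcat (const (2 ^ m) (2 ^ m * B.w) z) (const (2 ^ m) (2 ^ m * B.w) z)
      |>.insert_vcat ((const (2 ^ m) (2 ^ m * B.w) z).hcat (const (2 ^ m) (2 ^ m * B.w) z))
          ((const (2 ^ m) (2 ^ m * B.w) z).hcat (const (2 ^ m) (2 ^ m * B.w) z))
      |>.insert_vcat (staircase z B (2 ^ m)) (const (2 ^ m) (2 ^ m * B.w) z)
      |>.insert_vcat (const (2 ^ m) (2 ^ m * B.w) z) (staircase z B (2 ^ m))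
      |>.insert_hcat ((staircase z B (2 ^ m)).vcat (const (2 ^ m) (2 ^ m * B.w) z))
          ((const (2 ^ m) (2 ^ m * B.w) z).vcat (staircase z B (2 ^ m))) (hST := by simp; omega)
    have hpow : 2 ^ m + 2 ^ m = 2 ^ (m + 1) := by ring
    rw [staircase_add, hpow, const_hcat_const (by rw [← add_mul, hpow]),
      const_vcat_const hpow] at h'
    exact h'.mono (by omega) (by simp [Set.insert_subset_iff])

end DerivableWithin

end SLP2

open SLP2

theorem derivableWithin_binSuffix : ∀ m : ℕ, DerivableWithin (12 * m + 3)
    {const (2 ^ m) 1 .zero, const (2 ^ m) 1 .one, const (2 ^ m) 1 .dollar, binSuffix m}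
  | 0 => by
    refine (((DerivableWithin.singleton_single Alpha3.zero).insert_single .one).insert_single
      .dollar).mono le_rfl ?_
    simp [binSuffix_zero, single_eq_const, Set.insert_subset_iff]
  | m + 1 => by
    have h := derivableWithin_binSuffix m
      |>.insert_hcat (const (2 ^ m) 1 .zero) (binSuffix m)
      |>.insert_hcat (const (2 ^ m) 1 .one) (binSuffix m)
      |>.insert_vcat ((const (2 ^ m) 1 .zero).hcat (binSuffix m))
          ((const (2 ^ m) 1 .one).hcat (binSuffix m))
      |>.insert_vcat (const (2 ^ m) 1 .zero) (const (2 ^ m) 1 .zero)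
      |>.insert_vcat (const (2 ^ m) 1 .one) (const (2 ^ m) 1 .one)
      |>.insert_vcat (const (2 ^ m) 1 .dollar) (const (2 ^ m) 1 .dollar)
    have hpow : 2 ^ m + 2 ^ m = 2 ^ (m + 1) := by ring
    rw [const_vcat_const hpow, const_vcat_const hpow, const_vcat_const hpow, binSuffix_succ] at h
    exact h.mono (by omega) (by simp [Set.insert_subset_iff])

theorem derivableWithin_shiftBinStr (n : ℕ) : DerivableWithin (24 * n + 10) {shiftBinStr n} := by
  have hbin := derivableWithin_binSuffix n
    |>.insert_hcat (const (2 ^ n) 1 .dollar) (binSuffix n)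
    |>.insert_single .zero
    |>.insert_const_row (a := .zero) (by simp) (n + 1)
  rw [const_hcat_binSuffix] at hbin
  have h := hbin.staircase_two_pow (z := .zero) (B := binStr n) (by simp) (by simp) n
  rw [staircase_binStr] at h
  exact h.mono (by omega) (by simp)

/-- There is an absolute constant `c > 0` such that for every
`n ≥ 1` and `N = 2^n`, there is a 2D SLP of size at most `c * n` deriving the
2D string `ShiftBin_N`. -/
theorem shiftbin_small_slp :
    ∃ c : ℕ, 0 < c ∧ ∀ n : ℕ, 1 ≤ n →
      ∃ G : SLP2 Alpha3, G.WF ∧ G.exp = shiftBinStr n ∧ G.size ≤ c * n := by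
  refine ⟨34, by norm_num, fun n hn => ?_⟩
  obtain ⟨G, hG, hexp, hsize⟩ := (derivableWithin_shiftBinStr n).exists_slp
  exact ⟨G, hG, hexp, by omega⟩
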